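/- Averaging upper bound on the margin (Lemma C.5): For any nonempty subset S ⊆ [n], γ(X,Y) ≤ Σ_{U ⊆ [n]} P(U) · (1/|S|) · ‖Σ_{i ∈ S ∩ U} x_i y_i‖₂. -/

import Mathlib

open MeasureTheory ProbabilityTheory
open scoped BigOperators ENNReal

noncomputable section

abbrev E (d : ℕ) : Type := EuclideanSpace ℝ (Fin d)

/-- The standard Gaussian measure `N(0, I_d)` on `ℝ^d`. -/
def stdGaussian (d : ℕ) : Measure (E d) :=
  (Measure.pi fun _ : Fin d => gaussianReal 0 1).map
    (⇑(EuclideanSpace.equiv (Fin d) ℝ).symm)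

/-- The set `F_B` of vector fields bounded by 1 in norm. -/
def FB (d : ℕ) : Set (E d → E d) := {v | ∀ z, ‖v z‖ ≤ 1}

/-- `∫ ⟨v(z), x⟩ 𝟙[⟨x,z⟩>0] dμ_N(z)`. -/
def mIntegral (d : ℕ) (v : E d → E d) (x : E d) : ℝ :=
  ∫ z, (if 0 < (inner ℝ x z : ℝ) then (inner ℝ (v z) x : ℝ) else 0) ∂(stdGaussian d)

/-- The margin `γ_v̄(X,Y)`. -/
def marginV (d n : ℕ) (x : Fin n → E d) (y : Fin n → ℝ) (v : E d → E d) : ℝ :=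
  ⨅ i, y i * mIntegral d v (x i)

/-- The margin `γ(X,Y) = max_{v̄ ∈ F_B} γ_v̄(X,Y)`. -/
def gammaM (d n : ℕ) (x : Fin n → E d) (y : Fin n → ℝ) : ℝ :=
  ⨆ v ∈ FB d, marginV d n x y v

end
noncomputable section

/-- The cone `C(U) = {z : ⟨z, x_i⟩ > 0 ↔ i ∈ U}` for a finite index set `U ⊆ [n]`. -/
def coneC (d n : ℕ) (x : Fin n → E d) (U : Finset (Fin n)) : Set (E d) :=
  {z | ∀ i, 0 < (inner ℝ (x i) z : ℝ) ↔ i ∈ U}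

instance stdGaussian_isProb (d : ℕ) : IsProbabilityMeasure (stdGaussian d) := by
  unfold _root_.stdGaussian
  exact Measure.isProbabilityMeasure_map
    ((EuclideanSpace.equiv (Fin d) ℝ).symm.continuous.measurable).aemeasurable

lemma measurableSet_coneC (d n : ℕ) (x : Fin n → E d) (U : Finset (Fin n)) :
    MeasurableSet (coneC d n x U) := by
  have : coneC d n x U = ⋂ i, {z | 0 < (inner ℝ (x i) z : ℝ) ↔ i ∈ U} := by
    ext z; simp [coneC, Set.mem_iInter]
  rw [this]
  refine MeasurableSet.iInter fun i => ?_
  have hm : Measurable fun z : E d => (inner ℝ (x i) z : ℝ) :=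
    (continuous_const.inner continuous_id).measurable
  by_cases hi : i ∈ U
  · simp only [hi, iff_true]
    exact measurableSet_lt measurable_const hm
  · simp only [hi, iff_false, not_lt]
    exact measurableSet_le hm measurable_const

lemma norm_sum_eq_indicator (d n : ℕ) (x : Fin n → E d) (y : Fin n → ℝ)
    (S : Finset (Fin n)) (z : E d) :
    ‖∑ i ∈ S, if 0 < (inner ℝ (x i) z : ℝ) then y i • x i else 0‖
      = ∑ U : Finset (Fin n), (coneC d n x U).indicator
          (fun _ => ‖∑ i ∈ S ∩ U, y i • x i‖) z := by
  classical
  set Uz : Finset (Fin n) := Finset.univ.filter (fun i => 0 < (inner ℝ (x i) z : ℝ)) with hUz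
  have hmem : z ∈ coneC d n x Uz := by
    intro i; simp [hUz, Finset.mem_filter]
  have hsum : (∑ U : Finset (Fin n), (coneC d n x U).indicator
      (fun _ => ‖∑ i ∈ S ∩ U, y i • x i‖) z) = ‖∑ i ∈ S ∩ Uz, y i • x i‖ := by
    rw [Finset.sum_eq_single_of_mem Uz (Finset.mem_univ _)]
    · simp [Set.indicator_of_mem hmem]
    · intro U _ hne
      apply Set.indicator_of_notMem
      intro hz
      apply hne
      ext i
      rw [← hz i, hmem i]
  rw [hsum]
  congr 1
  rw [← Finset.sum_filter]
  congr 1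
  ext i
  simp [hUz, Finset.mem_filter]

/-- **Lemma C.5 (averaging upper bound on the margin).** For any nonempty `S ⊆ [n]`,
`γ(X,Y) ≤ Σ_{U ⊆ [n]} P(U) · (1/|S|) · ‖Σ_{i ∈ S ∩ U} x_i y_i‖₂`. -/
theorem margin_averaging_upper_bound (d n : ℕ) (hn : 0 < n)
    (x : Fin n → E d) (y : Fin n → ℝ)
    (hx : ∀ i, ‖x i‖ = 1) (hy : ∀ i, y i = 1 ∨ y i = -1)
    (S : Finset (Fin n)) (hS : S.Nonempty) :
    gammaM d n x y ≤ ∑ U : Finset (Fin n),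
      (stdGaussian d (coneC d n x U)).toReal *
        ((S.card : ℝ)⁻¹ * ‖∑ i ∈ S ∩ U, y i • x i‖) := by
  classical
  set RHS : ℝ := ∑ U : Finset (Fin n),
      (stdGaussian d (coneC d n x U)).toReal *
        ((S.card : ℝ)⁻¹ * ‖∑ i ∈ S ∩ U, y i • x i‖) with hRHSdef
  have hRHS : 0 ≤ RHS := by
    apply Finset.sum_nonneg
    intro U _
    positivity
  rw [gammaM]
  refine Real.iSup_le (fun v => Real.iSup_le (fun hv => ?_) hRHS) hRHS
  have hn' : Nonempty (Fin n) := ⟨⟨0, hn⟩⟩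
  -- the integrand for index i
  set g : Fin n → E d → ℝ := fun i z =>
    if 0 < (inner ℝ (x i) z : ℝ) then (inner ℝ (v z) (x i) : ℝ) else 0 with hg
  have hbdd : BddBelow (Set.range fun i => y i * mIntegral d v (x i)) :=
    (Set.finite_range _).bddBelow
  by_cases hint : ∀ i ∈ S, Integrable (g i) (stdGaussian d)
  · -- main case : all relevant integrands integrable
    obtain ⟨j, hjS⟩ := hS
    have hcard : (0 : ℝ) < S.card := by
      exact_mod_cast Finset.card_pos.mpr ⟨j, hjS⟩
    -- step 1 : inf ≤ average
    have step1 : (S.card : ℝ) * marginV d n x y v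
        ≤ ∑ i ∈ S, y i * mIntegral d v (x i) := by
      have := Finset.card_nsmul_le_sum S (fun i => y i * mIntegral d v (x i))
        (marginV d n x y v) (fun i _ => ciInf_le hbdd i)
      simpa [nsmul_eq_mul] using this
    -- the combined vector field
    set w : E d → E d := fun z =>
      ∑ i ∈ S, if 0 < (inner ℝ (x i) z : ℝ) then y i • x i else 0 with hw
    have hpt : ∀ z, (∑ i ∈ S, y i * g i z) = (inner ℝ (v z) (w z) : ℝ) := by
      intro z
      rw [hw]
      simp only [inner_sum]
      refine Finset.sum_congr rfl fun i _ => ?_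
      simp only [hg]
      by_cases hc : 0 < (inner ℝ (x i) z : ℝ)
      · rw [if_pos hc, if_pos hc, real_inner_smul_right]
      · rw [if_neg hc, if_neg hc, inner_zero_right, mul_zero]
    have hintsum : Integrable (fun z => ∑ i ∈ S, y i * g i z) (stdGaussian d) :=
      integrable_finset_sum S fun i hi => (hint i hi).const_mul (y i)
    have hinner_int : Integrable (fun z => (inner ℝ (v z) (w z) : ℝ)) (stdGaussian d) :=
      hintsum.congr (Filter.Eventually.of_forall hpt)
    -- step 2 : sum of integrals = integral of inner product
    have step2 : (∑ i ∈ S, y i * mIntegral d v (x i))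
        = ∫ z, (inner ℝ (v z) (w z) : ℝ) ∂(stdGaussian d) := by
      have : ∀ i ∈ S, y i * mIntegral d v (x i)
          = ∫ z, y i * g i z ∂(stdGaussian d) := by
        intro i _
        rw [mIntegral, ← integral_const_mul]
      rw [Finset.sum_congr rfl this, ← integral_finset_sum S
        (fun i hi => (hint i hi).const_mul (y i))]
      exact integral_congr_ae (Filter.Eventually.of_forall hpt)
    -- the simple function bound
    have hindic_int : ∀ U : Finset (Fin n),
        Integrable ((coneC d n x U).indicator
          (fun _ => ‖∑ i ∈ S ∩ U, y i • x i‖)) (stdGaussian d) := fun U =>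
      (integrable_const _).indicator (measurableSet_coneC d n x U)
    have hnormw_int : Integrable (fun z => ‖w z‖) (stdGaussian d) := by
      have : (fun z => ‖w z‖) = fun z => ∑ U : Finset (Fin n),
          (coneC d n x U).indicator (fun _ => ‖∑ i ∈ S ∩ U, y i • x i‖) z := by
        funext z; exact norm_sum_eq_indicator d n x y S z
      rw [this]
      exact integrable_finset_sum _ fun U _ => hindic_int U
    -- step 3 : pointwise Cauchy-Schwarz
    have step3 : ∫ z, (inner ℝ (v z) (w z) : ℝ) ∂(stdGaussian d)
        ≤ ∫ z, ‖w z‖ ∂(stdGaussian d) := by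
      refine integral_mono hinner_int hnormw_int fun z => ?_
      calc (inner ℝ (v z) (w z) : ℝ) ≤ ‖v z‖ * ‖w z‖ := real_inner_le_norm _ _
        _ ≤ ‖w z‖ := mul_le_of_le_one_left (norm_nonneg _) (hv z)
    -- step 4 : integral of the simple function
    have step4 : ∫ z, ‖w z‖ ∂(stdGaussian d)
        = ∑ U : Finset (Fin n), (stdGaussian d (coneC d n x U)).toReal *
            ‖∑ i ∈ S ∩ U, y i • x i‖ := by
      have : ∫ z, ‖w z‖ ∂(stdGaussian d) = ∑ U : Finset (Fin n),
          ∫ z, (coneC d n x U).indicator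
            (fun _ => ‖∑ i ∈ S ∩ U, y i • x i‖) z ∂(stdGaussian d) := by
        rw [← integral_finset_sum _ fun U _ => hindic_int U]
        exact integral_congr_ae (Filter.Eventually.of_forall fun z =>
          norm_sum_eq_indicator d n x y S z)
      rw [this]
      refine Finset.sum_congr rfl fun U _ => ?_
      rw [integral_indicator_const _ (measurableSet_coneC d n x U), smul_eq_mul]
      rfl
    -- put everything together
    have final : marginV d n x y v
        ≤ (S.card : ℝ)⁻¹ * ∑ U : Finset (Fin n),
            (stdGaussian d (coneC d n x U)).toReal * ‖∑ i ∈ S ∩ U, y i • x i‖ := by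
      rw [le_inv_mul_iff₀ hcard]
      calc (S.card : ℝ) * marginV d n x y v
          ≤ ∑ i ∈ S, y i * mIntegral d v (x i) := step1
        _ = ∫ z, (inner ℝ (v z) (w z) : ℝ) ∂(stdGaussian d) := step2
        _ ≤ ∫ z, ‖w z‖ ∂(stdGaussian d) := step3
        _ = _ := step4
    refine final.trans (le_of_eq ?_)
    rw [hRHSdef, Finset.mul_sum]
    refine Finset.sum_congr rfl fun U _ => by ring
  · -- some integrand not integrable : the corresponding integral is 0
    push_neg at hint
    obtain ⟨i, hiS, hni⟩ := hint
    have h0 : mIntegral d v (x i) = 0 := integral_undef hni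
    calc marginV d n x y v ≤ y i * mIntegral d v (x i) := ciInf_le hbdd i
      _ = 0 := by rw [h0, mul_zero]
      _ ≤ RHS := hRHS

end
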